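/- arXiv:1011.1868 — 2 statements merged into one kernel-verified Lean document; each statement's English description precedes it below -/
import Mathlib

section
/- Let 0 < ε < 1/6 and set ε' = ε − 6ε². Let n ≥ 2 and R ≥ 1 be natural numbers, let m be a natural number with m ≥ (1−2ε)·n·R, and let X₁, …, X_m be independent random variables each uniformly distributed on ZMod n. Let L = ⌈(1+3ε)·ln(n)/R⌉. Then the probability that there exists some a ∈ ZMod n such that the cyclic interval {a, a+1, …, a+L−1} ⊆ ZMod n contains none of the values X₁, …, X_m is at most n^(−ε'). -/
/-!
A single uniform call misses a fixed cyclic interval of length `L` with probability at most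
`1 - L/n ≤ exp (-L/n)`, so all `m` independent calls miss it with probability at most
`exp (-mL/n) ≤ n^(-(1+ε'))`, because `mL ≥ (1-2ε)(1+3ε) n log n = (1+ε') n log n`.
A union bound over the `n` starting points gives `n^(-ε')`.
-/

open MeasureTheory ProbabilityTheory Real
open scoped ENNReal

lemma natCast_sub_min_div_le_exp_neg (L : ℕ) {n : ℕ} (hn : 0 < n) :
    ((n - min L n : ℕ) : ℝ) / n ≤ exp (-(L / n)) := by
  rcases le_total L n with hLn | hnL
  · rw [min_eq_left hLn, Nat.cast_sub hLn, sub_div, div_self (by positivity)]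
    linarith [add_one_le_exp (-(L / n : ℝ))]
  · rw [min_eq_right hnL, Nat.sub_self, Nat.cast_zero, zero_div]
    exact (exp_pos _).le

lemma mul_exp_neg_div_le_rpow_neg {x δ y : ℝ} (hx : 0 < x) (hy : (1 + δ) * x * log x ≤ y) :
    x * exp (-(y / x)) ≤ x ^ (-δ) := by
  have hyx : (1 + δ) * log x ≤ y / x := by
    rw [le_div_iff₀ hx]; linarith
  calc x * exp (-(y / x)) ≤ exp (log x) * exp (-((1 + δ) * log x)) := by
        rw [exp_log hx]; gcongr
    _ = x ^ (-δ) := by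
        rw [← exp_add, rpow_def_of_pos hx]; ring_nf

section Uniform

variable {Ω α : Type*} [MeasurableSpace Ω] [MeasurableSpace α] {μ : Measure Ω}

lemma measure_preimage_finset_eq_card_mul [MeasurableSingletonClass α] {X : Ω → α}
    (hX : Measurable X) {c : ℝ≥0∞} (hc : ∀ a, μ {ω | X ω = a} = c) (S : Finset α) :
    μ (X ⁻¹' S) = S.card * c := by
  rw [← sum_measure_preimage_singleton S fun a _ => hX (measurableSet_singleton a)]
  simp [Set.preimage, hc]

lemma ProbabilityTheory.iIndepFun.measure_iInter_preimage_le_pow {ι : Type*} [Fintype ι]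
    {X : ι → Ω → α} (hX : iIndepFun X μ) {s : Set α} (hs : MeasurableSet s) {p : ℝ≥0∞}
    (hp : ∀ i, μ (X i ⁻¹' s) ≤ p) : μ (⋂ i, X i ⁻¹' s) ≤ p ^ Fintype.card ι := by
  rw [hX.meas_iInter fun i => ⟨s, hs, rfl⟩]
  exact Finset.prod_le_pow_card _ _ _ fun i _ => hp i

end Uniform

namespace ZMod

variable {n : ℕ}

def cyclicInterval (a : ZMod n) (L : ℕ) : Finset (ZMod n) :=
  (Finset.range L).image fun t : ℕ => a + t

lemma mem_cyclicInterval {a x : ZMod n} {L : ℕ} :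
    x ∈ cyclicInterval a L ↔ ∃ t < L, a + t = x := by
  simp [cyclicInterval]

lemma min_le_card_cyclicInterval (a : ZMod n) (L : ℕ) :
    min L n ≤ (cyclicInterval a L).card := by
  refine Finset.le_card_of_inj_on_range (fun t : ℕ => a + t) (fun t ht => ?_)
    fun t ht t' ht' h => ?_
  · exact mem_cyclicInterval.2 ⟨t, ht.trans_le (min_le_left _ _), rfl⟩
  · have := (ZMod.natCast_eq_natCast_iff' t t' n).1 (add_left_cancel h)
    rwa [Nat.mod_eq_of_lt (ht.trans_le (min_le_right _ _)),
      Nat.mod_eq_of_lt (ht'.trans_le (min_le_right _ _))] at this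

lemma card_compl_cyclicInterval_le [NeZero n] (a : ZMod n) (L : ℕ) :
    (cyclicInterval a L)ᶜ.card ≤ n - min L n := by
  rw [Finset.card_compl, ZMod.card]
  exact Nat.sub_le_sub_left (min_le_card_cyclicInterval a L) n

variable {Ω : Type*}

lemma setOf_exists_forall_ne_add_eq_iUnion_iInter {ι : Type*} (X : ι → Ω → ZMod n) (L : ℕ) :
    {ω | ∃ a : ZMod n, ∀ t : ℕ, t < L → ∀ i, X i ω ≠ a + (t : ZMod n)} =
      ⋃ a : ZMod n, ⋂ i, X i ⁻¹' (cyclicInterval a L : Set (ZMod n))ᶜ := by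
  ext ω
  simp only [Set.mem_ofPred_eq, Set.mem_iUnion, Set.mem_iInter, Set.mem_preimage,
    Set.mem_compl_iff, Finset.mem_coe, mem_cyclicInterval, not_exists, not_and]
  exact exists_congr fun a =>
    ⟨fun h i t ht hx => h t ht i hx.symm, fun h t ht i hx => h i t ht hx.symm⟩

variable [MeasurableSpace Ω] {μ : Measure Ω} [MeasurableSpace (ZMod n)]

lemma measure_preimage_compl_cyclicInterval_le [NeZero n] [MeasurableSingletonClass (ZMod n)]
    {X : Ω → ZMod n} (hX : Measurable X) (hunif : ∀ a, μ {ω | X ω = a} = 1 / n)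
    (a : ZMod n) (L : ℕ) :
    μ (X ⁻¹' (cyclicInterval a L : Set (ZMod n))ᶜ) ≤ ENNReal.ofReal (exp (-(L / n))) := by
  have hn : 0 < n := Nat.pos_of_neZero n
  rw [← Finset.coe_compl, measure_preimage_finset_eq_card_mul hX hunif, ← div_eq_mul_one_div,
    ← ENNReal.ofReal_natCast, ← ENNReal.ofReal_natCast n,
    ← ENNReal.ofReal_div_of_pos (by positivity)]
  refine ENNReal.ofReal_le_ofReal ((div_le_div_of_nonneg_right ?_ n.cast_nonneg).trans
    (natCast_sub_min_div_le_exp_neg L hn))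
  exact_mod_cast card_compl_cyclicInterval_le a L

end ZMod

theorem stmt2_general {Ω : Type*} [MeasurableSpace Ω] (μ : Measure Ω)
    (ε ε' : ℝ) (hε : 0 < ε) (hε' : ε' = ε - 6*ε^2)
    (n R m : ℕ) (hn : 2 ≤ n) (hR : 1 ≤ R) (hm : (1 - 2*ε) * n * R ≤ (m : ℝ))
    [MeasurableSpace (ZMod n)] [MeasurableSingletonClass (ZMod n)]
    (X : Fin m → Ω → ZMod n) (hmeas : ∀ i, Measurable (X i))
    (hindep : iIndepFun X μ)
    (hunif : ∀ i (a : ZMod n), μ {ω | X i ω = a} = 1 / n)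
    (L : ℕ) (hL : L = ⌈(1 + 3*ε) * Real.log n / R⌉₊) :
    μ {ω | ∃ a : ZMod n, ∀ t : ℕ, t < L → ∀ i, X i ω ≠ a + (t : ZMod n)} ≤
      ENNReal.ofReal ((n : ℝ) ^ (-ε')) := by
  have : NeZero n := ⟨by omega⟩
  have hmL : (1 + ε') * n * log n ≤ m * L := by
    have hlog : 0 ≤ log n := log_nonneg (by exact_mod_cast (by omega : 1 ≤ n))
    calc (1 + ε') * n * log n = (1 - 2*ε) * n * R * ((1 + 3*ε) * log n / R) := by
          rw [hε']; field_simp; ring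
      _ ≤ m * L := by
          rw [hL]
          exact mul_le_mul hm (Nat.le_ceil _) (by positivity) m.cast_nonneg
  rw [ZMod.setOf_exists_forall_ne_add_eq_iUnion_iInter]
  calc μ (⋃ a : ZMod n, ⋂ i, X i ⁻¹' (ZMod.cyclicInterval a L : Set (ZMod n))ᶜ)
      ≤ ∑ a : ZMod n, μ (⋂ i, X i ⁻¹' (ZMod.cyclicInterval a L : Set (ZMod n))ᶜ) :=
        measure_iUnion_fintype_le μ _
    _ ≤ ∑ _a : ZMod n, ENNReal.ofReal (exp (-(L / n))) ^ m := by
        gcongr with a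
        have := hindep.measure_iInter_preimage_le_pow (Finset.measurableSet _).compl
          fun i => ZMod.measure_preimage_compl_cyclicInterval_le (hmeas i) (hunif i) a L
        rwa [Fintype.card_fin] at this
    _ = ENNReal.ofReal (n * exp (-(m * L / n))) := by
        rw [Finset.sum_const, Finset.card_univ, ZMod.card, nsmul_eq_mul,
          ← ENNReal.ofReal_pow (exp_pos _).le, ← ENNReal.ofReal_natCast,
          ← ENNReal.ofReal_mul n.cast_nonneg, ← exp_nat_mul]
        ring_nf
    _ ≤ ENNReal.ofReal ((n : ℝ) ^ (-ε')) :=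
        ENNReal.ofReal_le_ofReal (mul_exp_neg_div_le_rpow_neg (by positivity) hmL)

/-- Union-bound step in the upper-bound proof of the hybrid rumor-spreading protocol:
with `m ≥ (1-2ε)nR` independent uniform random calls on the `n` nodes (identified with
`ZMod n`), the probability that some cyclic interval `{a, a+1, …, a+L-1}` of length
`L = ⌈(1+3ε)·ln(n)/R⌉` contains none of the call targets is at most `n^(-ε')`,
where `ε' = ε - 6ε²`. -/
theorem stmt2 {Ω : Type*} [MeasurableSpace Ω] (μ : Measure Ω) [IsProbabilityMeasure μ]
    (ε ε' : ℝ) (hε : 0 < ε) (hε6 : ε < 1/6) (hε' : ε' = ε - 6*ε^2)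
    (n R m : ℕ) (hn : 2 ≤ n) (hR : 1 ≤ R) (hm : (1 - 2*ε) * n * R ≤ (m : ℝ))
    [MeasurableSpace (ZMod n)] [MeasurableSingletonClass (ZMod n)]
    (X : Fin m → Ω → ZMod n) (hmeas : ∀ i, Measurable (X i))
    (hindep : iIndepFun X μ)
    (hunif : ∀ i (a : ZMod n), μ {ω | X i ω = a} = 1 / n)
    (L : ℕ) (hL : L = ⌈(1 + 3*ε) * Real.log n / R⌉₊) :
    μ {ω | ∃ a : ZMod n, ∀ t : ℕ, t < L → ∀ i, X i ω ≠ a + (t : ZMod n)} ≤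
      ENNReal.ofReal ((n : ℝ) ^ (-ε')) :=
  stmt2_general μ ε ε' hε hε' n R m hn hR hm X hmeas hindep hunif L hL
end

section
/- Let 0 < ε < 1 and for each natural number n ≥ 2 set Δ(n) = √(2(1−ε)·ln n). Then for every δ > 0 there exists N such that for all n ≥ N: ∏_{j=1}^{⌊Δ(n)⌋} (1 − (Δ(n)−j)/n)ⁿ ≥ (1−δ)·n^(−(1−ε)). -/
/-!
Each factor is bounded below through `log (1 - x) ≥ -x / (1 - x) ≥ -(x + 2x²)`
for `0 ≤ x ≤ 1/2`, so with `D = Δ(n)` the product is at least `exp (-(∑ⱼ (D - j) + 2 D³ / n))`.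
Since `∑_{j ≤ ⌊D⌋} (D - j) ≤ D² / 2` and `exp (-D² / 2) = n^(-(1-ε))`, it remains that
`D³ / n → 0`, as `D` grows only like `√(log n)`.
-/

open Finset Filter Topology Real

lemma exp_neg_div_one_sub_le {x : ℝ} (hx : x < 1) : exp (-(x / (1 - x))) ≤ 1 - x := by
  have h : 0 < 1 - x := by linarith
  have hlog := one_sub_inv_le_log_of_pos h
  calc exp (-(x / (1 - x))) = exp (1 - (1 - x)⁻¹) := by congr 1; field_simp; ring
    _ ≤ exp (log (1 - x)) := exp_le_exp.2 hlog
    _ = 1 - x := exp_log h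

lemma exp_neg_add_sq_div_le_one_sub_div_pow {t : ℝ} {n : ℕ} (ht : 0 ≤ t) (htn : 2 * t ≤ n) :
    exp (-(t + 2 * t ^ 2 / n)) ≤ (1 - t / n) ^ n := by
  rcases n.eq_zero_or_pos with rfl | hn
  · simp [ht]
  have hn : (0 : ℝ) < n := by exact_mod_cast hn
  set x := t / n with hx
  have hx0 : 0 ≤ x := by positivity
  have hx1 : x ≤ 1 / 2 := by rw [hx, div_le_iff₀ hn]; linarith
  have hquot : x / (1 - x) ≤ x + 2 * x ^ 2 := by
    rw [div_le_iff₀ (by linarith)]; nlinarith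
  calc exp (-(t + 2 * t ^ 2 / n)) = exp (-(x + 2 * x ^ 2)) ^ n := by
        rw [← exp_nat_mul]; congr 1; rw [hx]; field_simp
    _ ≤ (1 - x) ^ n := by
        gcongr
        exact (exp_le_exp.2 (neg_le_neg hquot)).trans (exp_neg_div_one_sub_le (by linarith))

lemma sum_Icc_sub_natCast (D : ℝ) (m : ℕ) :
    ∑ j ∈ Icc 1 m, (D - j) = m * D - m * (m + 1) / 2 := by
  induction m with
  | zero => simp
  | succ m ih =>
    rw [sum_Icc_succ_top (by omega), ih]
    push_cast
    ring

lemma sum_Icc_sub_natCast_le (D : ℝ) (m : ℕ) : ∑ j ∈ Icc 1 m, (D - j) ≤ D ^ 2 / 2 := by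
  rw [sum_Icc_sub_natCast]
  nlinarith [sq_nonneg (D - m), m.cast_nonneg (α := ℝ)]

lemma exp_neg_le_prod_one_sub_div_pow {D : ℝ} {n : ℕ} (hD : 0 ≤ D) (hDn : 2 * D ≤ n) :
    exp (-(D ^ 2 / 2 + 2 * D ^ 3 / n)) ≤ ∏ j ∈ Icc 1 ⌊D⌋₊, (1 - (D - j) / n) ^ n := by
  have hj : ∀ j ∈ Icc 1 ⌊D⌋₊, 0 ≤ D - j ∧ D - j ≤ D := by
    intro j hj
    have h1 : (1 : ℝ) ≤ j := by exact_mod_cast (mem_Icc.1 hj).1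
    have h2 : (j : ℝ) ≤ D := (Nat.cast_le.2 (mem_Icc.1 hj).2).trans (Nat.floor_le hD)
    constructor <;> linarith
  have hsum :
      ∑ j ∈ Icc 1 ⌊D⌋₊, (D - j) + ⌊D⌋₊ * (2 * D ^ 2 / n) ≤ D ^ 2 / 2 + 2 * D ^ 3 / n := by
    have := Nat.floor_le hD
    have : (⌊D⌋₊ : ℝ) * (2 * D ^ 2 / n) ≤ D * (2 * D ^ 2 / n) := by gcongr
    linarith [sum_Icc_sub_natCast_le D ⌊D⌋₊, show D * (2 * D ^ 2 / n) = 2 * D ^ 3 / n by ring]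
  calc exp (-(D ^ 2 / 2 + 2 * D ^ 3 / n))
      ≤ exp (-(∑ j ∈ Icc 1 ⌊D⌋₊, (D - j) + ⌊D⌋₊ * (2 * D ^ 2 / n))) := by gcongr
    _ = ∏ j ∈ Icc 1 ⌊D⌋₊, exp (-((D - j) + 2 * D ^ 2 / n)) := by
        rw [← exp_sum, sum_neg_distrib, sum_add_distrib, sum_const, Nat.card_Icc, nsmul_eq_mul]
        simp
    _ ≤ ∏ j ∈ Icc 1 ⌊D⌋₊, (1 - (D - j) / n) ^ n := by
        refine prod_le_prod (fun _ _ => (exp_pos _).le) fun j hj' => ?_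
        obtain ⟨h0, hD'⟩ := hj j hj'
        refine le_trans ?_ (exp_neg_add_sq_div_le_one_sub_div_pow h0 (by linarith))
        gcongr

lemma tendsto_sqrt_mul_log_pow_div_atTop {c : ℝ} (hc : 0 ≤ c) (k : ℕ) :
    Tendsto (fun x => √(c * log x) ^ k / x) atTop (𝓝 0) := by
  have hlim : Tendsto (fun x => c ^ k * (log x ^ k / (1 * x + 0) * x⁻¹)) atTop (𝓝 0) := by
    simpa using ((tendsto_pow_log_div_mul_add_atTop 1 0 k one_ne_zero).mul
      tendsto_inv_atTop_zero).const_mul (c ^ k)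
  refine (sqrt_zero ▸ hlim.sqrt).congr' ?_
  filter_upwards [eventually_ge_atTop 1] with x hx
  have hy : 0 ≤ c * log x := mul_nonneg hc (log_nonneg hx)
  rw [show c ^ k * (log x ^ k / (1 * x + 0) * x⁻¹) = (√(c * log x) ^ k / x) ^ 2 by
    rw [div_pow, ← pow_mul, mul_comm k, pow_mul, sq_sqrt hy]; ring]
  exact sqrt_sq (by positivity)

theorem stmt5_general (ε : ℝ) (hε1 : ε < 1)
    (Δ : ℕ → ℝ) (hΔ : ∀ n, 2 ≤ n → Δ n = Real.sqrt (2 * (1 - ε) * Real.log n)) :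
    ∀ δ : ℝ, 0 < δ → ∃ N : ℕ, ∀ n, N ≤ n →
      (∏ j ∈ Finset.Icc 1 ⌊Δ n⌋₊, (1 - (Δ n - j) / n) ^ n) ≥
        (1 - δ) * (n : ℝ) ^ (-(1 - ε)) := by
  intro δ hδ
  have hc : 0 ≤ 2 * (1 - ε) := by linarith
  have hsmall (k : ℕ) :
      Tendsto (fun n : ℕ => √(2 * (1 - ε) * log n) ^ k / n) atTop (𝓝 0) :=
    (tendsto_sqrt_mul_log_pow_div_atTop hc k).comp tendsto_natCast_atTop_atTop
  have hcorr :
      Tendsto (fun n : ℕ => exp (-(2 * (√(2 * (1 - ε) * log n) ^ 3 / n)))) atTop (𝓝 1) := by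
    simpa using ((hsmall 3).const_mul 2).neg.rexp
  obtain ⟨N, hN⟩ := eventually_atTop.1 <|
    ((hsmall 1).eventually (ge_mem_nhds one_half_pos)).and <|
      (hcorr.eventually (lt_mem_nhds (by linarith : 1 - δ < 1))).and (eventually_ge_atTop 2)
  refine ⟨N, fun n hn => ?_⟩
  obtain ⟨hD, hcorr_n, hn2⟩ := hN n hn
  have hn0 : (0 : ℝ) < n := by positivity
  rw [hΔ n hn2]
  set D := √(2 * (1 - ε) * log n)
  have hexp_sq : exp (-(D ^ 2 / 2)) = (n : ℝ) ^ (-(1 - ε)) := by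
    rw [sq_sqrt (mul_nonneg hc (log_nonneg (by exact_mod_cast (by omega : 1 ≤ n)))),
      rpow_def_of_pos hn0]
    ring_nf
  calc (1 - δ) * (n : ℝ) ^ (-(1 - ε)) ≤ exp (-(2 * (D ^ 3 / n))) * exp (-(D ^ 2 / 2)) := by
        rw [hexp_sq]; gcongr
    _ = exp (-(D ^ 2 / 2 + 2 * D ^ 3 / n)) := by rw [← exp_add]; ring_nf
    _ ≤ _ := exp_neg_le_prod_one_sub_div_pow (sqrt_nonneg _) (by
        rw [pow_one, div_le_iff₀ hn0] at hD; linarith)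

/-- Third-phase estimate in the lower-bound proof of the hybrid rumor-spreading protocol
(case `R ≥ Δ`): with `Δ(n) = √(2(1-ε)·ln n)`,
`∏_{j=1}^{⌊Δ(n)⌋} (1 - (Δ(n)-j)/n)ⁿ ≥ (1-δ)·n^(-(1-ε))` for all sufficiently large `n`. -/
theorem stmt5 (ε : ℝ) (hε : 0 < ε) (hε1 : ε < 1)
    (Δ : ℕ → ℝ) (hΔ : ∀ n, 2 ≤ n → Δ n = Real.sqrt (2 * (1 - ε) * Real.log n)) :
    ∀ δ : ℝ, 0 < δ → ∃ N : ℕ, ∀ n, N ≤ n →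
      (∏ j ∈ Finset.Icc 1 ⌊Δ n⌋₊, (1 - (Δ n - j) / n) ^ n) ≥
        (1 - δ) * (n : ℝ) ^ (-(1 - ε)) :=
  stmt5_general ε hε1 Δ hΔ
end
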